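/- U^-_{v,t}(g) is a module over the two-parameter Kashiwara algebra B_{v,t}(g), where f_i acts by left multiplication and e_i' acts by the derivation-type operator defined by [e_i, y] = (k_i e_i''(y) - k_i' e_i'(y))/(v_i - v_i^{-1}); that is, the quantum Serre relations ∑_{p+p'=b}(-1)^p t_i^{-p(p' - 2⟨i,j⟩/(i·i) + 2⟨j,i⟩/(i·i))} e_i'^{[p]} e_j' e_i'^{[p']} = 0 hold in End(U^-) for i ≠ j, where b = 1 - 2i·j/(i·i). -/

import Mathlib

set_option synthInstance.maxHeartbeats 1000000
set_option maxHeartbeats 1000000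

/- STATEMENT 7: U^-_{v,t}(g) is a module over the two-parameter Kashiwara algebra: the
operators e_i' (acting together with left multiplication by the f_i) satisfy the quantum
Serre relations ∑_{p+p'=b} (-1)^p t_i^{-p(p'-2⟨i,j⟩/(i·i)+2⟨j,i⟩/(i·i))}
e_i'^{[p]} e_j' e_i'^{[p']} = 0 in End(U^-) for i ≠ j. -/
noncomputable section

/-- The field ℚ(t). -/
abbrev FF : Type := RatFunc ℚ
/-- The field ℚ(v,t), realized as ℚ(t)(v). -/
abbrev KK : Type := RatFunc FF
/-- The variable v. -/
def vv : KK := RatFunc.X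
/-- The variable t. -/
def tt : KK := algebraMap FF KK RatFunc.X

/-- The two-parameter quantum integer [n]_{v,t}. -/
def qnumvt (v t : KK) (n : ℕ) : KK := ((v*t)^n - ((v*t⁻¹)⁻¹)^n)/(v*t - (v*t⁻¹)⁻¹)
/-- The two-parameter quantum factorial. -/
def qfacvt (v t : KK) (n : ℕ) : KK := ∏ r ∈ Finset.Icc 1 n, qnumvt v t r

variable {I : Type} [Fintype I] [DecidableEq I]

/-- The symmetric bilinear form i·j = ⟨i,j⟩ + ⟨j,i⟩ attached to the matrix Λ = a. -/
def dotp (a : I → I → ℤ) (i j : I) : ℤ := a i j + a j i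
/-- v_i = v^{i·i/2} = v^{Λ_{ii}}. -/
def vip (a : I → I → ℤ) (i : I) : KK := vv ^ (a i i)
/-- t_i = t^{i·i/2} = t^{Λ_{ii}}. -/
def tip (a : I → I → ℤ) (i : I) : KK := tt ^ (a i i)
/-- b = 1 - 2i·j/(i·i), the length parameter in the quantum Serre relation. -/
def bserre (a : I → I → ℤ) (i j : I) : ℕ := (1 - (dotp a i j) / (a i i)).toNat

/-- The coefficient (-1)^p t_i^{-p(p' - 2⟨i,j⟩/(i·i) + 2⟨j,i⟩/(i·i))}/([p]!_{v_i,t_i}[p']!_{v_i,t_i})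
(p' = b - p) of the quantum Serre relation, with the t_i-power rewritten as an integer power
of t. -/
def serreCoeff (a : I → I → ℤ) (i j : I) (p : ℕ) : KK :=
  (-1 : KK) ^ p * tt ^ ((-(p : ℤ)) * (((bserre a i j - p : ℕ) : ℤ) * a i i - a i j + a j i)) /
    (qfacvt (vip a i) (tip a i) p * qfacvt (vip a i) (tip a i) (bserre a i j - p))

/-- The quantum Serre element ∑_{p+p'=b} (-1)^p t_i^{...} x_i^{[p]} x_j x_i^{[p']}. -/
def serreOf {A : Type*} [Ring A] [Algebra KK A] (a : I → I → ℤ) (x : I → A) (i j : I) : A :=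
  ∑ p ∈ Finset.range (bserre a i j + 1),
    serreCoeff a i j p • (x i ^ p * x j * x i ^ (bserre a i j - p))

/-- The defining relations of U^-_{v,t}(g): the quantum Serre relations among the f_i. -/
inductive SerreRel (a : I → I → ℤ) : FreeAlgebra KK I → FreeAlgebra KK I → Prop
  | serre (i j : I) (h : i ≠ j) : SerreRel a (serreOf a (FreeAlgebra.ι KK) i j) 0

/-- The negative part U^-_{v,t}(g) of the two-parameter quantum group, presented by
generators f_i and the quantum Serre relations. -/
def Uneg (a : I → I → ℤ) : Type := RingQuot (SerreRel a)

instance (a : I → I → ℤ) : Ring (Uneg a) := inferInstanceAs (Ring (RingQuot (SerreRel a)))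
instance (a : I → I → ℤ) : Algebra KK (Uneg a) :=
  inferInstanceAs (Algebra KK (RingQuot (SerreRel a)))

/-- The generator f_i of U^-. -/
def fgen (a : I → I → ℤ) (i : I) : Uneg a :=
  RingQuot.mkAlgHom KK (SerreRel a) (FreeAlgebra.ι KK i)

/-!
Write `S = ∑_p c_p e_i'^p e_j' e_i'^(b-p)` and `q_kl = v^(-k·l) t^(⟨k,l⟩-⟨l,k⟩)`, so that
`e_k'(f_l y) = δ_kl y + q_kl f_l e_k'(y)`. Moving `f_k` through `S` gives
`S(f_k y) = q_ik^b q_jk f_k S(y)`. For `k ∉ {i, j}` this is immediate; for `k = j` the extra terms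
add up to `(∑_p c_p q_ij^(b-p)) e_i'^b y`, which vanishes by Gauss's alternating q-binomial
identity; for `k = i` they telescope, because `c_(p+1) / c_p` is the ratio of the q-numbers
produced by commuting `e_i'` past `f_i`. Since `S 1 = 0` and the `f_k` generate `U^-`, `S = 0`.
-/

theorem Finset.sum_range_succ_add_eq_zero {M : Type*} [AddCommMonoid M] {u w : ℕ → M} {n : ℕ}
    (hu : u 0 = 0) (hw : w n = 0) (h : ∀ p < n, u (p + 1) + w p = 0) :
    ∑ p ∈ Finset.range (n + 1), (u p + w p) = 0 := by
  rw [Finset.sum_add_distrib, Finset.sum_range_succ' u, Finset.sum_range_succ w, hu, hw,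
    add_zero, add_zero, add_comm, ← Finset.sum_add_distrib]
  exact Finset.sum_eq_zero fun p hp => by rw [add_comm]; exact h p (Finset.mem_range.1 hp)

lemma two_mul_natCast_choose_two (k : ℕ) : 2 * (k.choose 2 : ℤ) = k * (k - 1) := by
  induction k with
  | zero => simp
  | succ m ih =>
    rw [Nat.choose_succ_succ, Nat.choose_one_right]
    push_cast
    linear_combination ih

section Monomials

-- In lemma names, `vt` stands for a Laurent monomial `vv ^ x * tt ^ y`.

lemma vv_ne_zero : vv ≠ 0 := RatFunc.X_ne_zero

lemma tt_ne_zero : tt ≠ 0 := by simp [tt, RatFunc.X_ne_zero]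

lemma intDegree_vv_zpow (x : ℤ) : (vv ^ x).intDegree = x := by
  induction x using Int.induction_on with
  | zero => simp
  | succ k ih =>
    rw [zpow_add_one₀ vv_ne_zero, RatFunc.intDegree_mul (zpow_ne_zero _ vv_ne_zero) vv_ne_zero,
      ih, vv, RatFunc.intDegree_X]
  | pred k ih =>
    rw [zpow_sub_one₀ vv_ne_zero, RatFunc.intDegree_mul (zpow_ne_zero _ vv_ne_zero)
      (inv_ne_zero vv_ne_zero), ih, RatFunc.intDegree_inv, vv, RatFunc.intDegree_X]
    ring

lemma intDegree_vv_zpow_mul_tt_zpow (x y : ℤ) : (vv ^ x * tt ^ y).intDegree = x := by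
  have htt : tt ^ y = RatFunc.C ((RatFunc.X : FF) ^ y) := by
    rw [tt, RatFunc.algebraMap_eq_C, map_zpow₀]
  rw [RatFunc.intDegree_mul (zpow_ne_zero _ vv_ne_zero) (zpow_ne_zero _ tt_ne_zero),
    intDegree_vv_zpow, htt, RatFunc.intDegree_C, add_zero]

lemma vv_zpow_mul_tt_zpow_ne {x x' : ℤ} (y y' : ℤ) (h : x ≠ x') :
    vv ^ x * tt ^ y ≠ vv ^ x' * tt ^ y' := fun he => h <| by
  simpa only [intDegree_vv_zpow_mul_tt_zpow] using congrArg RatFunc.intDegree he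

lemma vt_mul (x y x' y' : ℤ) :
    vv ^ x * tt ^ y * (vv ^ x' * tt ^ y') = vv ^ (x + x') * tt ^ (y + y') := by
  rw [zpow_add₀ vv_ne_zero, zpow_add₀ tt_ne_zero]; ring

lemma tt_mul_vt (y x' y' : ℤ) : tt ^ y * (vv ^ x' * tt ^ y') = vv ^ x' * tt ^ (y + y') := by
  rw [zpow_add₀ tt_ne_zero]; ring

lemma vt_pow (x y : ℤ) (n : ℕ) : (vv ^ x * tt ^ y) ^ n = vv ^ (x * n) * tt ^ (y * n) := by
  rw [mul_pow, ← zpow_natCast, ← zpow_natCast, ← zpow_mul, ← zpow_mul]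

lemma vt_zpow (x y z : ℤ) : (vv ^ x * tt ^ y) ^ z = vv ^ (x * z) * tt ^ (y * z) := by
  rw [mul_zpow, ← zpow_mul, ← zpow_mul]

end Monomials

section QNumbers

variable (v t : KK)

lemma qnumvt_eq (n : ℕ) :
    qnumvt v t n = ((v * t) ^ n - (v⁻¹ * t) ^ n) / (v * t - v⁻¹ * t) := by
  rw [qnumvt, mul_inv, inv_inv]

lemma qnumvt_zero : qnumvt v t 0 = 0 := by simp [qnumvt]

lemma qnumvt_add (p m : ℕ) :
    qnumvt v t (p + m) = (v * t) ^ m * qnumvt v t p + (v⁻¹ * t) ^ p * qnumvt v t m := by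
  simp only [qnumvt_eq]
  by_cases h : v * t - v⁻¹ * t = 0
  · simp [h]
  · field_simp
    ring

lemma qfacvt_succ (n : ℕ) : qfacvt v t (n + 1) = qfacvt v t n * qnumvt v t (n + 1) :=
  Finset.prod_Icc_succ_top (by omega) _

variable {v t}

lemma qfacvt_ne_zero_of_le {m n : ℕ} (h : qfacvt v t n ≠ 0) (hmn : m ≤ n) :
    qfacvt v t m ≠ 0 := by
  rw [qfacvt, Finset.prod_ne_zero_iff] at h ⊢
  exact fun r hr => h r (Finset.Icc_subset_Icc_right hmn hr)

lemma qnumvt_ne_zero_of_le {m n : ℕ} (h : qfacvt v t n ≠ 0) (hm : 1 ≤ m) (hmn : m ≤ n) :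
    qnumvt v t m ≠ 0 := by
  rw [qfacvt, Finset.prod_ne_zero_iff] at h
  exact h m (Finset.mem_Icc.2 ⟨hm, hmn⟩)

lemma qnumvt_succ_div_qfacvt_mul_qfacvt {n p : ℕ} (h : qfacvt v t n ≠ 0) (hp : p < n) :
    qnumvt v t (p + 1) / (qfacvt v t (p + 1) * qfacvt v t (n - (p + 1))) =
      qnumvt v t (n - p) / (qfacvt v t p * qfacvt v t (n - p)) := by
  obtain ⟨m, rfl⟩ : ∃ m, n = p + 1 + m := ⟨n - (p + 1), by omega⟩
  rw [show p + 1 + m - p = m + 1 by omega, show p + 1 + m - (p + 1) = m by omega,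
    qfacvt_succ, qfacvt_succ]
  have hp1 : qnumvt v t (p + 1) ≠ 0 := qnumvt_ne_zero_of_le h (by omega) (by omega)
  have hm1 : qnumvt v t (m + 1) ≠ 0 := qnumvt_ne_zero_of_le h (by omega) (by omega)
  have hp : qfacvt v t p ≠ 0 := qfacvt_ne_zero_of_le h (by omega)
  have hm : qfacvt v t m ≠ 0 := qfacvt_ne_zero_of_le h (by omega)
  field_simp

theorem sum_neg_one_pow_mul_div_qfacvt_mul_qfacvt_eq_zero {n : ℕ} (h : qfacvt v t n ≠ 0)
    (hn : n ≠ 0) :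
    ∑ p ∈ Finset.range (n + 1), (-1) ^ p * (v * t) ^ (n - p).choose 2 *
      (v⁻¹ * t) ^ p.choose 2 / (qfacvt v t p * qfacvt v t (n - p)) = 0 := by
  set α := v * t
  set β := v⁻¹ * t
  refine (mul_eq_zero.1 ?_).resolve_right (qnumvt_ne_zero_of_le h (by omega) le_rfl)
  rw [Finset.sum_mul]
  have hsplit : ∀ p ∈ Finset.range (n + 1),
      (-1) ^ p * α ^ (n - p).choose 2 * β ^ p.choose 2 / (qfacvt v t p * qfacvt v t (n - p)) *
        qnumvt v t n =
      (-1) ^ p * α ^ (n - p).choose 2 * β ^ p.choose 2 * α ^ (n - p) *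
          (qnumvt v t p / (qfacvt v t p * qfacvt v t (n - p))) +
        (-1) ^ p * α ^ (n - p).choose 2 * β ^ p.choose 2 * β ^ p *
          (qnumvt v t (n - p) / (qfacvt v t p * qfacvt v t (n - p))) := by
    intro p hp
    rw [← Nat.add_sub_of_le (Finset.mem_range_succ_iff.1 hp), qnumvt_add,
      Nat.add_sub_cancel_left]
    ring
  rw [Finset.sum_congr rfl hsplit]
  refine Finset.sum_range_succ_add_eq_zero (by simp [qnumvt_zero]) (by simp [qnumvt_zero])
    fun p hp => ?_
  obtain ⟨m, hm⟩ : ∃ m, n - p = m + 1 := ⟨n - (p + 1), by omega⟩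
  have hα : α ^ (n - (p + 1)).choose 2 * α ^ (n - (p + 1)) = α ^ (n - p).choose 2 := by
    rw [← pow_add, hm, show n - (p + 1) = m by omega, Nat.choose_succ_succ', Nat.choose_one_right,
      add_comm]
  have hβ : β ^ (p + 1).choose 2 = β ^ p.choose 2 * β ^ p := by
    rw [← pow_add, Nat.choose_succ_succ', Nat.choose_one_right, add_comm]
  rw [qnumvt_succ_div_qfacvt_mul_qfacvt h hp, hβ, pow_succ]
  linear_combination (-(-1) ^ p * β ^ p.choose 2 * β ^ p *
    (qnumvt v t (n - p) / (qfacvt v t p * qfacvt v t (n - p)))) * hα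

lemma geom_sum_inv_sq_eq (hv : v ≠ 0) (ht : t ≠ 0) (hv2 : v ^ 2 ≠ 1) (m : ℕ) :
    ∑ r ∈ Finset.range m, ((v ^ 2)⁻¹) ^ r = (v * t) ^ ((1 : ℤ) - m) * qnumvt v t m := by
  have hq : (v ^ 2)⁻¹ ≠ 1 := by simpa using hv2
  rw [geom_sum_eq hq, qnumvt_eq, zpow_sub₀ (mul_ne_zero hv ht), zpow_one, zpow_natCast]
  have hαβ : v * t - v⁻¹ * t ≠ 0 := by
    rw [← sub_mul]
    refine mul_ne_zero (sub_ne_zero.2 fun h => hv2 ?_) ht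
    field_simp at h
    linear_combination h
  have hq1 : (v ^ 2)⁻¹ - 1 ≠ 0 := sub_ne_zero.2 hq
  simp only [mul_pow, inv_pow] at hq1 hαβ ⊢
  field_simp
  ring

end QNumbers

section SkewDerivations

variable {K A : Type*} [CommRing K] [Ring A] [Algebra K A]

def serreOp (c : ℕ → K) (b : ℕ) (E F : Module.End K A) : Module.End K A :=
  ∑ p ∈ Finset.range (b + 1), c p • (E ^ p * F * E ^ (b - p))

lemma serreOp_apply (c : ℕ → K) (b : ℕ) (E F : Module.End K A) (y : A) :
    serreOp c b E F y = ∑ p ∈ Finset.range (b + 1), c p • (E ^ p) (F ((E ^ (b - p)) y)) := by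
  simp [serreOp]

variable {c : ℕ → K} {b : ℕ} {E F : Module.End K A} {f : A} {q q' : K}

lemma pow_apply_mul_of_skew (hE : ∀ y, E (f * y) = q • (f * E y)) (n : ℕ) (y : A) :
    (E ^ n) (f * y) = q ^ n • (f * (E ^ n) y) := by
  induction n generalizing y with
  | zero => simp
  | succ n ih =>
    rw [pow_succ, Module.End.mul_apply, hE, map_smul, ih, smul_smul, ← Module.End.mul_apply,
      ← pow_succ, ← pow_succ']

lemma pow_succ_apply_mul_of_skewDerivation (hE : ∀ y, E (f * y) = y + q • (f * E y)) (n : ℕ)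
    (y : A) :
    (E ^ (n + 1)) (f * y) =
      q ^ (n + 1) • (f * (E ^ (n + 1)) y) + (∑ r ∈ Finset.range (n + 1), q ^ r) • (E ^ n) y := by
  induction n generalizing y with
  | zero => simp [hE, add_comm]
  | succ n ih =>
    rw [pow_succ, Module.End.mul_apply, hE, map_add, map_smul, ih, smul_add, smul_smul, smul_smul,
      ← Module.End.mul_apply _ E, ← pow_succ, ← Module.End.mul_apply _ E, ← pow_succ, ← pow_succ',
      geom_sum_succ (n := n + 1), add_smul, one_smul]
    abel

lemma pow_apply_mul_of_skewDerivation (hE : ∀ y, E (f * y) = y + q • (f * E y)) (n : ℕ)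
    (y : A) :
    (E ^ n) (f * y) = q ^ n • (f * (E ^ n) y) + (∑ r ∈ Finset.range n, q ^ r) • (E ^ (n - 1)) y := by
  cases n with
  | zero => simp
  | succ n => exact pow_succ_apply_mul_of_skewDerivation hE n y

lemma serreOp_apply_one (hE : E 1 = 0) (hF : F 1 = 0) : serreOp c b E F 1 = 0 := by
  have hFE : ∀ n, F ((E ^ n) 1) = 0 := by
    rintro (_ | n)
    · simpa using hF
    · rw [pow_succ, Module.End.mul_apply, hE, map_zero, map_zero]
  rw [serreOp_apply]
  exact Finset.sum_eq_zero fun p _ => by rw [hFE, map_zero, smul_zero]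

lemma serreOp_apply_mul_of_skew (hE : ∀ y, E (f * y) = q • (f * E y))
    (hF : ∀ y, F (f * y) = q' • (f * F y)) (y : A) :
    serreOp c b E F (f * y) = (q ^ b * q') • (f * serreOp c b E F y) := by
  rw [serreOp_apply, serreOp_apply, Finset.mul_sum, Finset.smul_sum]
  refine Finset.sum_congr rfl fun p hp => ?_
  rw [pow_apply_mul_of_skew hE, map_smul, hF, map_smul, map_smul, pow_apply_mul_of_skew hE,
    ← pow_mul_pow_sub q (Finset.mem_range_succ_iff.1 hp)]
  simp only [smul_smul, mul_smul_comm]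
  congr 1
  ring

lemma serreOp_apply_mul_of_skew_of_skewDerivation (hE : ∀ y, E (f * y) = q • (f * E y))
    (hF : ∀ y, F (f * y) = y + q' • (f * F y))
    (hc : ∑ p ∈ Finset.range (b + 1), c p * q ^ (b - p) = 0) (y : A) :
    serreOp c b E F (f * y) = (q ^ b * q') • (f * serreOp c b E F y) := by
  have hterm : ∀ p ∈ Finset.range (b + 1),
      c p • (E ^ p) (F ((E ^ (b - p)) (f * y))) =
        (c p * q ^ (b - p)) • (E ^ b) y +
          (q ^ b * q') • (f * c p • (E ^ p) (F ((E ^ (b - p)) y))) := by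
    intro p hp
    have hpb := Finset.mem_range_succ_iff.1 hp
    rw [pow_apply_mul_of_skew hE, map_smul, hF, map_smul, map_add, map_smul,
      pow_apply_mul_of_skew hE, ← Module.End.mul_apply, ← pow_add, Nat.add_sub_cancel' hpb,
      ← pow_mul_pow_sub q hpb]
    simp only [smul_add, smul_smul, mul_smul_comm]
    congr 2
    ring
  rw [serreOp_apply, serreOp_apply, Finset.sum_congr rfl hterm, Finset.sum_add_distrib,
    ← Finset.sum_smul, hc, zero_smul, zero_add, Finset.mul_sum, Finset.smul_sum]

lemma serreOp_apply_mul_of_skewDerivation_of_skew (hE : ∀ y, E (f * y) = y + q • (f * E y))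
    (hF : ∀ y, F (f * y) = q' • (f * F y))
    (hc : ∀ p < b, c (p + 1) * q ^ (b - (p + 1)) * q' * ∑ r ∈ Finset.range (p + 1), q ^ r +
      c p * ∑ r ∈ Finset.range (b - p), q ^ r = 0) (y : A) :
    serreOp c b E F (f * y) = (q ^ b * q') • (f * serreOp c b E F y) := by
  have hterm : ∀ p ∈ Finset.range (b + 1),
      c p • (E ^ p) (F ((E ^ (b - p)) (f * y))) =
        (q ^ b * q') • (f * c p • (E ^ p) (F ((E ^ (b - p)) y))) +
          ((c p * q ^ (b - p) * q' * ∑ r ∈ Finset.range p, q ^ r) •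
              (E ^ (p - 1)) (F ((E ^ (b - p)) y)) +
            (c p * ∑ r ∈ Finset.range (b - p), q ^ r) • (E ^ p) (F ((E ^ (b - p - 1)) y))) := by
    intro p hp
    rw [pow_apply_mul_of_skewDerivation hE, map_add, map_smul, map_smul, hF, map_add, map_smul,
      map_smul, map_smul, pow_apply_mul_of_skewDerivation hE,
      ← pow_mul_pow_sub q (Finset.mem_range_succ_iff.1 hp)]
    simp only [smul_add, smul_smul, mul_smul_comm]
    module
  rw [serreOp_apply, serreOp_apply, Finset.sum_congr rfl hterm, Finset.sum_add_distrib,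
    Finset.sum_range_succ_add_eq_zero (by simp) (by simp) fun p hp => ?_, add_zero,
    Finset.mul_sum, Finset.smul_sum]
  rw [Nat.add_sub_cancel, Nat.sub_sub, ← add_smul, hc p hp, zero_smul]

theorem Module.End.eq_zero_of_apply_one_of_apply_generator_mul {K A ι : Type*} [CommRing K]
    [Ring A] [Algebra K A] {g : ι → A} (hg : Algebra.adjoin K (Set.range g) = ⊤)
    {S : Module.End K A} (h1 : S 1 = 0) (hS : ∀ k y, S y = 0 → S (g k * y) = 0) : S = 0 := by
  have hmul : ∀ x ∈ Algebra.adjoin K (Set.range g), ∀ w, S w = 0 → S (x * w) = 0 := by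
    intro x hx
    induction hx using Algebra.adjoin_induction with
    | mem x hx =>
      obtain ⟨k, rfl⟩ := hx
      exact hS k
    | algebraMap r =>
      intro w hw
      rw [← Algebra.smul_def, map_smul, hw, smul_zero]
    | add x y _ _ hx hy =>
      intro w hw
      rw [add_mul, map_add, hx w hw, hy w hw, add_zero]
    | mul x y _ _ hx hy =>
      intro w hw
      rw [mul_assoc]
      exact hx _ (hy w hw)
  ext u
  simpa using hmul u (hg ▸ Algebra.mem_top) 1 h1

end SkewDerivations

section SerreCoefficients

variable {ι : Type} (a : ι → ι → ℤ) (i j : ι)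

def skewFactor : KK := vv ^ (-(dotp a i j)) * tt ^ (a i j - a j i)

variable {a i j}

lemma natCast_bserre (hpos : 0 < a i i) (hle : dotp a i j ≤ 0) :
    (bserre a i j : ℤ) = 1 - dotp a i j / a i i := by
  have : dotp a i j / a i i ≤ 0 := Int.ediv_nonpos_of_nonpos_of_neg hle hpos
  rw [bserre, Int.toNat_of_nonneg (by omega)]

lemma one_le_bserre (hpos : 0 < a i i) (hle : dotp a i j ≤ 0) : 1 ≤ bserre a i j := by
  have h := natCast_bserre hpos hle
  have : dotp a i j / a i i ≤ 0 := Int.ediv_nonpos_of_nonpos_of_neg hle hpos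
  omega

lemma bserre_sub_one_mul (hpos : 0 < a i i) (hle : dotp a i j ≤ 0) (hdvd : a i i ∣ dotp a i j) :
    ((bserre a i j : ℤ) - 1) * a i i = -dotp a i j := by
  rw [natCast_bserre hpos hle, sub_sub_cancel_left, neg_mul, Int.ediv_mul_cancel hdvd]

lemma qfacvt_vip_tip_ne_zero (hd : a i i ≠ 0) (n : ℕ) : qfacvt (vip a i) (tip a i) n ≠ 0 := by
  rw [qfacvt, Finset.prod_ne_zero_iff]
  intro r hr
  have hr : (1 : ℤ) ≤ r := by exact_mod_cast (Finset.mem_Icc.1 hr).1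
  rw [qnumvt_eq, vip, tip, ← zpow_neg, vt_pow, vt_pow]
  refine div_ne_zero (sub_ne_zero.2 (vv_zpow_mul_tt_zpow_ne _ _ ?_))
    (sub_ne_zero.2 (vv_zpow_mul_tt_zpow_ne _ _ (by omega)))
  intro h
  exact hd (by nlinarith)

lemma geom_sum_skewFactor_self (hd : a i i ≠ 0) (m : ℕ) :
    ∑ r ∈ Finset.range m, skewFactor a i i ^ r =
      (vip a i * tip a i) ^ ((1 : ℤ) - m) * qnumvt (vip a i) (tip a i) m := by
  have hsq : vip a i ^ 2 = vv ^ (2 * a i i) * tt ^ (0 : ℤ) := by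
    rw [vip, zpow_zero, mul_one, ← zpow_natCast, ← zpow_mul, mul_comm]
    rfl
  have hself : skewFactor a i i = (vip a i ^ 2)⁻¹ := by
    rw [hsq, skewFactor, dotp, sub_self, zpow_zero, mul_one, mul_one, ← zpow_neg, two_mul]
  rw [hself]
  refine geom_sum_inv_sq_eq (zpow_ne_zero _ vv_ne_zero) (zpow_ne_zero _ tt_ne_zero) ?_ m
  show vip a i ^ 2 ≠ 1
  rw [hsq, ← zpow_zero vv, ← mul_one (vv ^ (0 : ℤ)), ← zpow_zero tt]
  exact vv_zpow_mul_tt_zpow_ne _ _ (by omega)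

theorem sum_serreCoeff_mul_skewFactor_pow (hpos : 0 < a i i) (hb : 1 ≤ bserre a i j)
    (hserre : ((bserre a i j : ℤ) - 1) * a i i = -dotp a i j) :
    ∑ p ∈ Finset.range (bserre a i j + 1),
      serreCoeff a i j p * skewFactor a i j ^ (bserre a i j - p) = 0 := by
  have hfac := qfacvt_vip_tip_ne_zero hpos.ne'
  simp only [serreCoeff]
  generalize bserre a i j = b at *
  -- `c_p q_ij^(b-p)` is `C` times the `p`-th term of Gauss's sum for `v_i t_i` and `v_i⁻¹ t_i`.
  let C : KK := vv ^ (a i i * b.choose 2) * tt ^ (b * (a i j - a j i) - a i i * b.choose 2)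
  have hterm : ∀ p ∈ Finset.range (b + 1),
      (-1) ^ p * tt ^ (-(p : ℤ) * (((b - p : ℕ) : ℤ) * a i i - a i j + a j i)) /
          (qfacvt (vip a i) (tip a i) p * qfacvt (vip a i) (tip a i) (b - p)) *
          skewFactor a i j ^ (b - p) =
        C * ((-1) ^ p * (vip a i * tip a i) ^ (b - p).choose 2 *
          ((vip a i)⁻¹ * tip a i) ^ p.choose 2 /
            (qfacvt (vip a i) (tip a i) p * qfacvt (vip a i) (tip a i) (b - p))) := by
    intro p hp
    have hc : ((b - p : ℕ) : ℤ) = b - p := by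
      have := Finset.mem_range_succ_iff.1 hp
      omega
    have hmono : tt ^ (-(p : ℤ) * (((b - p : ℕ) : ℤ) * a i i - a i j + a j i)) *
        skewFactor a i j ^ (b - p) =
          C * ((vip a i * tip a i) ^ (b - p).choose 2 * ((vip a i)⁻¹ * tip a i) ^ p.choose 2) := by
      have h₁ := two_mul_natCast_choose_two b
      have h₂ := two_mul_natCast_choose_two (b - p)
      have h₃ := two_mul_natCast_choose_two p
      rw [hc] at h₂ ⊢
      rw [skewFactor, vip, tip, ← zpow_neg, vt_pow, vt_pow, vt_pow, tt_mul_vt, vt_mul, vt_mul, hc]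
      congr 2 <;> apply mul_left_cancel₀ (two_ne_zero : (2 : ℤ) ≠ 0)
      · linear_combination (-2 * ((b : ℤ) - p)) * hserre - a i i * h₁ - a i i * h₂ + a i i * h₃
      · linear_combination a i i * h₁ - a i i * h₂ - a i i * h₃
    linear_combination (-1) ^ p /
      (qfacvt (vip a i) (tip a i) p * qfacvt (vip a i) (tip a i) (b - p)) * hmono
  rw [Finset.sum_congr rfl hterm, ← Finset.mul_sum,
    sum_neg_one_pow_mul_div_qfacvt_mul_qfacvt_eq_zero (hfac b) (by omega), mul_zero]

theorem serreCoeff_succ_mul_add_serreCoeff_mul (hpos : 0 < a i i)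
    (hserre : ((bserre a i j : ℤ) - 1) * a i i = -dotp a i j) {p : ℕ} (hp : p < bserre a i j) :
    serreCoeff a i j (p + 1) * skewFactor a i i ^ (bserre a i j - (p + 1)) * skewFactor a j i *
        ∑ r ∈ Finset.range (p + 1), skewFactor a i i ^ r +
      serreCoeff a i j p * ∑ r ∈ Finset.range (bserre a i j - p), skewFactor a i i ^ r = 0 := by
  have hfac := qfacvt_vip_tip_ne_zero hpos.ne'
  rw [geom_sum_skewFactor_self hpos.ne', geom_sum_skewFactor_self hpos.ne']
  simp only [serreCoeff]
  generalize bserre a i j = b at *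
  have hshift := qnumvt_succ_div_qfacvt_mul_qfacvt (hfac b) hp
  have hmono : tt ^ (-((p + 1 : ℕ) : ℤ) * (((b - (p + 1) : ℕ) : ℤ) * a i i - a i j + a j i)) *
      skewFactor a i i ^ (b - (p + 1)) * skewFactor a j i *
        (vip a i * tip a i) ^ ((1 : ℤ) - ((p + 1 : ℕ) : ℤ)) =
      tt ^ (-(p : ℤ) * (((b - p : ℕ) : ℤ) * a i i - a i j + a j i)) *
        (vip a i * tip a i) ^ ((1 : ℤ) - ((b - p : ℕ) : ℤ)) := by
    have h₁ : ((b - (p + 1) : ℕ) : ℤ) = b - p - 1 := by omega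
    have h₂ : ((b - p : ℕ) : ℤ) = b - p := by omega
    rw [skewFactor, skewFactor, vip, tip, vt_pow, vt_zpow, vt_zpow, tt_mul_vt, tt_mul_vt, vt_mul,
      vt_mul, h₁, h₂, dotp, dotp]
    congr 2
    · rw [dotp] at hserre
      push_cast
      linear_combination -hserre
    · push_cast
      ring
  linear_combination (-(-1) ^ p * (qnumvt (vip a i) (tip a i) (p + 1) /
      (qfacvt (vip a i) (tip a i) (p + 1) * qfacvt (vip a i) (tip a i) (b - (p + 1))))) * hmono -
    (-1) ^ p * (tt ^ (-(p : ℤ) * (((b - p : ℕ) : ℤ) * a i i - a i j + a j i)) *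
      (vip a i * tip a i) ^ ((1 : ℤ) - ((b - p : ℕ) : ℤ))) * hshift

end SerreCoefficients

lemma adjoin_range_fgen {ι : Type} (a : ι → ι → ℤ) :
    Algebra.adjoin KK (Set.range (fgen a)) = ⊤ := by
  refine Algebra.eq_top_iff.2 fun u => ?_
  obtain ⟨z, rfl⟩ := RingQuot.mkAlgHom_surjective KK (SerreRel a) u
  induction z using FreeAlgebra.induction with
  | grade0 r =>
    rw [AlgHom.commutes]
    exact Subalgebra.algebraMap_mem _ r
  | grade1 k => exact Algebra.subset_adjoin ⟨k, rfl⟩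
  | mul z₁ z₂ h₁ h₂ =>
    rw [map_mul]
    exact Subalgebra.mul_mem _ h₁ h₂
  | add z₁ z₂ h₁ h₂ =>
    rw [map_add]
    exact Subalgebra.add_mem _ h₁ h₂

lemma serreOf_eq_serreOp {ι A : Type} [Ring A] [Algebra KK A] (a : ι → ι → ℤ)
    (E : ι → Module.End KK A) (i j : ι) :
    serreOf a E i j = serreOp (serreCoeff a i j) (bserre a i j) (E i) (E j) := rfl

theorem serre_relations_for_eprime (a : I → I → ℤ)
    (hpos : ∀ i, 0 < a i i) (hneg : ∀ i j, i ≠ j → a i j ≤ 0)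
    (hdvd : ∀ i j, a i i ∣ (a i j + a j i))
    (e' : I → Module.End KK (Uneg a))
    (he'one : ∀ i, e' i 1 = 0)
    (he'f : ∀ i j y, e' i (fgen a j * y) =
      (if i = j then y else 0) +
        (vv ^ (-(dotp a i j)) * tt ^ (a i j - a j i)) • (fgen a j * e' i y)) :
    ∀ i j, i ≠ j → serreOf a e' i j = (0 : Module.End KK (Uneg a)) := by
  intro i j hij
  have hskew : ∀ k l, k ≠ l → ∀ y, e' k (fgen a l * y) = skewFactor a k l • (fgen a l * e' k y) :=
    fun k l hkl y => by rw [he'f, if_neg hkl, zero_add, skewFactor]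
  have hder : ∀ k y, e' k (fgen a k * y) = y + skewFactor a k k • (fgen a k * e' k y) :=
    fun k y => by rw [he'f, if_pos rfl, skewFactor]
  have hle : dotp a i j ≤ 0 := add_nonpos (hneg i j hij) (hneg j i hij.symm)
  have hserre := bserre_sub_one_mul (hpos i) hle (hdvd i j)
  rw [serreOf_eq_serreOp]
  set S := serreOp (serreCoeff a i j) (bserre a i j) (e' i) (e' j)
  have hgen : ∀ k y, S (fgen a k * y) =
      (skewFactor a i k ^ bserre a i j * skewFactor a j k) • (fgen a k * S y) := by
    intro k y
    rcases eq_or_ne i k with rfl | hik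
    · exact serreOp_apply_mul_of_skewDerivation_of_skew (hder i) (hskew j i hij.symm)
        (fun p hp => serreCoeff_succ_mul_add_serreCoeff_mul (hpos i) hserre hp) y
    rcases eq_or_ne j k with rfl | hjk
    · exact serreOp_apply_mul_of_skew_of_skewDerivation (hskew i j hij) (hder j)
        (sum_serreCoeff_mul_skewFactor_pow (hpos i) (one_le_bserre (hpos i) hle) hserre) y
    · exact serreOp_apply_mul_of_skew (hskew i k hik) (hskew j k hjk) y
  refine Module.End.eq_zero_of_apply_one_of_apply_generator_mul (adjoin_range_fgen a)
    (serreOp_apply_one (he'one i) (he'one j)) fun k y hy => ?_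
  rw [hgen, hy, mul_zero, smul_zero]
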